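/- arXiv:1202.5782 — 2 statements merged into one kernel-verified Lean document; each statement's English description precedes it below -/
import Mathlib

section
/- Let M be an Artinian R-module. Then the following are equivalent for Spec^s(M) with the second classical Zariski topology: (a) it is a Hausdorff space; (b) it is a T1-space; (c) it is the cofinite topology; (d) it is discrete; (e) Spec^s(M) = Min(M), the set of all minimal submodules of M. -/
/-!
Open sets of the second classical Zariski topology are upward closed, so a second submodule
specializes to every second submodule it contains. In an Artinian module every nonzero submodule
contains a minimal one, hence in a T1 space of second submodules every second submodule is minimal.

Conversely, if all second submodules are minimal, each singleton `{S} = V^{s*}(S)` is closed, and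
`S ↦ Ann(S)` is injective: two minimal submodules with the same annihilator have a second sum,
which cannot be minimal. Its values are maximal ideals `m` with nonzero `m`-torsion, and these are
finitely many because the `m`-torsion submodules for distinct maximal `m` are independent and `M`
is Artinian. A finite T1 space is discrete, and discreteness gives the remaining conditions.
-/

open Pointwise

variable (R M : Type*) [CommRing R] [AddCommGroup M] [Module R M]

/-- A nonzero submodule `S` is *second* if for every `r : R`, `r • S = S` or `r • S = ⊥`. -/
def IsSecondSubmodule (S : Submodule R M) : Prop :=
  S ≠ ⊥ ∧ ∀ r : R, r • S = S ∨ r • S = ⊥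

/-- The second spectrum of `M`: the collection of all second submodules of `M`. -/
def SecondSpec : Type _ := {S : Submodule R M // IsSecondSubmodule R M S}

/-- `V^{s*}(N)`: the set of second submodules contained in `N`. -/
def Vs (N : Submodule R M) : Set (SecondSpec R M) := {S | S.1 ≤ N}

/-- `W^s(N)`: the complement of `V^{s*}(N)` in `Spec^s(M)`. -/
def Ws (N : Submodule R M) : Set (SecondSpec R M) := (Vs R M N)ᶜ

/-- The second classical Zariski topology on `Spec^s(M)`, generated by the
sub-basis `{W^s(N) : N ≤ M}`. -/
instance secondZariski : TopologicalSpace (SecondSpec R M) :=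
  TopologicalSpace.generateFrom {U | ∃ N : Submodule R M, U = Ws R M N}

/-- The second socle of a submodule `N`: the sum of all second submodules of `M`
contained in `N`. -/
def secSocle (N : Submodule R M) : Submodule R M :=
  sSup {S : Submodule R M | IsSecondSubmodule R M S ∧ S ≤ N}

namespace Submodule

variable {R M : Type*} [CommRing R] [AddCommGroup M] [Module R M]

theorem smul_eq_bot_iff_mem_annihilator {r : R} {S : Submodule R M} :
    r • S = ⊥ ↔ r ∈ S.annihilator := by
  simp [eq_bot_iff, SetLike.le_def, mem_smul_pointwise_iff_exists, mem_annihilator]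

theorem iSupIndep_torsionBySet_isMaximal :
    iSupIndep fun m : {I : Ideal R // I.IsMaximal} => torsionBySet R M (m.1 : Set R) :=
  iSupIndep_iff_supIndep.mpr fun _ =>
    supIndep_torsionBySet_ideal fun m _ m' _ hne =>
      m.2.coprime_of_ne m'.2 (Subtype.coe_injective.ne hne)

theorem finite_setOf_isMaximal_torsionBySet_ne_bot [IsArtinian R M] :
    {I : Ideal R | I.IsMaximal ∧ torsionBySet R M (I : Set R) ≠ ⊥}.Finite := by
  refine ((WellFoundedLT.finite_ne_bot_of_iSupIndep
    (iSupIndep_torsionBySet_isMaximal (M := M))).image Subtype.val).subset ?_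
  rintro I ⟨hI, hne⟩
  exact ⟨⟨I, hI⟩, hne, rfl⟩

end Submodule

section SecondSubmodule

variable {R M}

open Submodule

theorem IsSecondSubmodule.smul_eq_self {S : Submodule R M} (hS : IsSecondSubmodule R M S)
    {r : R} (hr : r ∉ S.annihilator) : r • S = S :=
  (hS.2 r).resolve_right (smul_eq_bot_iff_mem_annihilator.not.mpr hr)

theorem IsSecondSubmodule.sup {S T : Submodule R M} (hS : IsSecondSubmodule R M S)
    (hT : IsSecondSubmodule R M T) (h : S.annihilator = T.annihilator) :
    IsSecondSubmodule R M (S ⊔ T) := by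
  refine ⟨fun h0 => hS.1 (eq_bot_mono le_sup_left h0), fun r => ?_⟩
  rw [smul_sup']
  by_cases hr : r ∈ S.annihilator
  · right
    rw [smul_eq_bot_iff_mem_annihilator.mpr hr, smul_eq_bot_iff_mem_annihilator.mpr (h ▸ hr),
      sup_bot_eq]
  · left
    rw [hS.smul_eq_self hr, hT.smul_eq_self (h ▸ hr)]

theorem IsAtom.isSecondSubmodule {S : Submodule R M} (hS : IsAtom S) : IsSecondSubmodule R M S :=
  ⟨hS.1, fun r => (smul_le_self_of_tower r S).eq_or_lt.imp id (hS.2 _)⟩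

theorem IsAtom.annihilator_isMaximal {S : Submodule R M} (hS : IsAtom S) :
    S.annihilator.IsMaximal :=
  have := isSimpleModule_iff_isAtom.mpr hS
  IsSimpleModule.annihilator_isMaximal

theorem setOf_isSecondSubmodule_eq_setOf_isAtom_iff :
    {S : Submodule R M | IsSecondSubmodule R M S} = {S | IsAtom S} ↔
      ∀ S : SecondSpec R M, IsAtom S.1 := by
  refine ⟨fun h S => (h.subset S.2 :), fun h => ?_⟩
  ext S
  exact ⟨fun hS => h ⟨S, hS⟩, IsAtom.isSecondSubmodule⟩

theorem SecondSpec.annihilator_injective (h : ∀ S : SecondSpec R M, IsAtom S.1) :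
    Function.Injective fun S : SecondSpec R M => S.1.annihilator := by
  intro S T hST
  have hU := h ⟨S.1 ⊔ T.1, S.2.sup T.2 hST⟩
  have hS : S.1 = S.1 ⊔ T.1 := (hU.le_iff.mp le_sup_left).resolve_left (h S).1
  have hT : T.1 = S.1 ⊔ T.1 := (hU.le_iff.mp le_sup_right).resolve_left (h T).1
  exact Subtype.ext (hS.trans hT.symm)

theorem SecondSpec.finite [IsArtinian R M] (h : ∀ S : SecondSpec R M, IsAtom S.1) :
    Finite (SecondSpec R M) := by
  have hmaps : Set.MapsTo (fun S : SecondSpec R M => S.1.annihilator) Set.univ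
      {I | I.IsMaximal ∧ torsionBySet R M (I : Set R) ≠ ⊥} := fun S _ =>
    ⟨(h S).annihilator_isMaximal, fun h0 => (h S).1 (eq_bot_mono ((torsion_gc R M).le_u_l S.1) h0)⟩
  exact Set.finite_univ_iff.mp <| finite_setOf_isMaximal_torsionBySet_ne_bot.of_injOn hmaps
    (SecondSpec.annihilator_injective h).injOn

theorem isClosed_Vs (N : Submodule R M) : IsClosed (Vs R M N) :=
  ⟨TopologicalSpace.isOpen_generateFrom_of_mem ⟨N, rfl⟩⟩

theorem SecondSpec.specializes_of_le {S T : SecondSpec R M} (h : T.1 ≤ S.1) : S ⤳ T := by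
  rw [specializes_iff_nhds, TopologicalSpace.nhds_generateFrom, TopologicalSpace.nhds_generateFrom]
  refine le_iInf₂ fun U ⟨hTU, N, hU⟩ => iInf₂_le U ⟨?_, N, hU⟩
  subst hU
  exact fun hSN => hTU (h.trans hSN)

theorem SecondSpec.isAtom_of_t1Space [IsArtinian R M] [T1Space (SecondSpec R M)]
    (S : SecondSpec R M) : IsAtom S.1 := by
  have : IsAtomic (Submodule R M) := isAtomic_of_orderBot_wellFounded_lt wellFounded_lt
  obtain ⟨T, hT, hTS⟩ := (eq_bot_or_exists_atom_le S.1).resolve_left S.2.1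
  have hST : S = ⟨T, hT.isSecondSubmodule⟩ := (SecondSpec.specializes_of_le hTS).eq
  exact hST ▸ hT

theorem SecondSpec.t1Space (h : ∀ S : SecondSpec R M, IsAtom S.1) : T1Space (SecondSpec R M) where
  t1 S := by
    have hS : {S} = Vs R M S.1 := Set.ext fun T =>
      ⟨fun hT => hT ▸ le_refl S.1,
        fun hTS => Subtype.ext (((h S).le_iff.mp hTS).resolve_left (h T).1)⟩
    exact hS ▸ isClosed_Vs S.1

end SecondSubmodule

/-- Cor 2.20: for an Artinian module `M`, Hausdorff, T1, cofinite, discrete and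
`Spec^s(M) = Min(M)` are all equivalent for `Spec^s(M)`. -/
theorem stmt9 [IsArtinian R M] :
    List.TFAE
      [ T2Space (SecondSpec R M),
        T1Space (SecondSpec R M),
        (∀ U : Set (SecondSpec R M), IsOpen U ↔ (U = ∅ ∨ Uᶜ.Finite)),
        DiscreteTopology (SecondSpec R M),
        {S : Submodule R M | IsSecondSubmodule R M S} = {S : Submodule R M | IsAtom S} ] := by
  rw [setOf_isSecondSubmodule_eq_setOf_isAtom_iff]
  tfae_have 1 → 2 := fun _ => inferInstance
  tfae_have 4 → 1 := fun _ => inferInstance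
  tfae_have 2 → 5 := fun _ => SecondSpec.isAtom_of_t1Space
  tfae_have 5 → 4 := fun h =>
    have := SecondSpec.finite h
    have := SecondSpec.t1Space h
    inferInstance
  tfae_have 5 → 3 := fun h U =>
    have := SecondSpec.finite h
    have := tfae_5_to_4 h
    ⟨fun _ => Or.inr (Set.toFinite _), fun _ => isOpen_discrete U⟩
  tfae_have 3 → 2 := fun h => ⟨fun S =>
    isOpen_compl_iff.mp <| (h _).mpr <| Or.inr <| by rw [compl_compl]; exact Set.finite_singleton S⟩
  tfae_finish
end

section
/- Let M be an R-module having the descending chain condition on socle submodules (every descending chain of socle submodules of M stabilizes). Then for every n ∈ ℕ and all submodules N1, ..., Nn of M, the set W^s(N1) ∩ W^s(N2) ∩ ... ∩ W^s(Nn) is a quasi-compact subset of Spec^s(M) with the second classical Zariski topology. In particular, Spec^s(M) itself is quasi-compact. -/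
open Pointwise

variable (R M : Type*) [CommRing R] [AddCommGroup M] [Module R M]

/-!
Under the descending chain condition, for any filter `f` on `Spec^s(M)` there is a least
submodule `L₀` with `V^{s*}(L₀) ∈ f`: take a minimal socle submodule with this property and
observe that `V^{s*}(L₀ ∩ L) = V^{s*}(soc(L₀ ∩ L))`. If `f` is an ultrafilter, every
`W^s(L)` not in `f` has `V^{s*}(L) ∈ f`, hence `L₀ ≤ L`; so `f` converges to every second
submodule contained in `L₀`. Thus every subset of `Spec^s(M)` is quasi-compact.
-/

lemma secSocle_le (N : Submodule R M) : secSocle R M N ≤ N :=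
  sSup_le fun _ hS => hS.2

lemma le_secSocle {S N : Submodule R M} (hS : IsSecondSubmodule R M S) (hSN : S ≤ N) :
    S ≤ secSocle R M N :=
  le_sSup ⟨hS, hSN⟩

lemma secSocle_secSocle (N : Submodule R M) :
    secSocle R M (secSocle R M N) = secSocle R M N :=
  le_antisymm (secSocle_le R M _) (sSup_le_sSup fun _ hS => ⟨hS.1, le_secSocle R M hS.1 hS.2⟩)

lemma Vs_secSocle (N : Submodule R M) : Vs R M (secSocle R M N) = Vs R M N :=
  Set.ext fun S => ⟨fun h => h.trans (secSocle_le R M N), le_secSocle R M S.2⟩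

lemma Vs_inf (N L : Submodule R M) : Vs R M (N ⊓ L) = Vs R M N ∩ Vs R M L :=
  Set.ext fun S => show S.1 ≤ N ⊓ L ↔ S.1 ≤ N ∧ S.1 ≤ L from le_inf_iff

lemma Vs_top : Vs R M ⊤ = Set.univ :=
  Set.eq_univ_of_forall fun S => show S.1 ≤ ⊤ from le_top

lemma compl_Ws (N : Submodule R M) : (Ws R M N)ᶜ = Vs R M N :=
  compl_compl _

lemma wellFoundedOn_socle_of_dcc
    (hdcc : ∀ f : ℕ → Submodule R M, (∀ n, secSocle R M (f n) = f n) →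
      (∀ n, f (n + 1) ≤ f n) → ∃ n, ∀ m, n ≤ m → f m = f n) :
    {N : Submodule R M | secSocle R M N = N}.WellFoundedOn (· < ·) := by
  rw [Set.wellFoundedOn_iff_no_descending_seq]
  intro f hf
  have hlt : ∀ n, f (n + 1) < f n := fun n => f.map_rel_iff.2 n.lt_succ_self
  obtain ⟨n, hn⟩ := hdcc f hf fun n => (hlt n).le
  exact (hlt n).ne (hn (n + 1) n.le_succ)

lemma exists_isLeast_Vs_mem
    (hwf : {N : Submodule R M | secSocle R M N = N}.WellFoundedOn (· < ·))
    (f : Filter (SecondSpec R M)) : ∃ L₀, IsLeast {L | Vs R M L ∈ f} L₀ := by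
  let T := {X : Submodule R M | secSocle R M X = X ∧ Vs R M X ∈ f}
  have hsocle_mem (L : Submodule R M) (hL : Vs R M L ∈ f) : secSocle R M L ∈ T :=
    ⟨secSocle_secSocle R M L, (Vs_secSocle R M L).symm ▸ hL⟩
  obtain ⟨L₀, ⟨-, hL₀⟩, hmin⟩ := (hwf.subset fun _ hX => hX.1).exists_minimal
    ⟨_, hsocle_mem ⊤ ((Vs_top R M).symm ▸ Filter.univ_mem)⟩
  refine ⟨L₀, hL₀, fun L hL => ?_⟩
  have hmeet : secSocle R M (L₀ ⊓ L) ∈ T :=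
    hsocle_mem _ ((Vs_inf R M L₀ L).symm ▸ Filter.inter_mem hL₀ hL)
  calc L₀ ≤ secSocle R M (L₀ ⊓ L) := hmin hmeet ((secSocle_le R M _).trans inf_le_left)
    _ ≤ L₀ ⊓ L := secSocle_le R M _
    _ ≤ L := inf_le_right

lemma Ultrafilter.le_nhds_of_isLeast_Vs_mem {f : Ultrafilter (SecondSpec R M)}
    {L₀ : Submodule R M} (hL₀ : IsLeast {L | Vs R M L ∈ f} L₀) {S : SecondSpec R M}
    (hS : S ∈ Vs R M L₀) : (f : Filter (SecondSpec R M)) ≤ nhds S := by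
  rw [← Filter.tendsto_id', TopologicalSpace.tendsto_nhds_generateFrom_iff]
  rintro _ ⟨L, rfl⟩ hSL
  by_contra hWs
  have hVs : Vs R M L ∈ f := compl_Ws R M L ▸ Ultrafilter.compl_mem_iff_notMem.2 hWs
  exact hSL (hS.trans (hL₀.2 hVs))

theorem isCompact_of_wellFoundedOn_socle
    (hwf : {N : Submodule R M | secSocle R M N = N}.WellFoundedOn (· < ·))
    (K : Set (SecondSpec R M)) : IsCompact K := by
  rw [isCompact_iff_ultrafilter_le_nhds]
  intro f hfK
  obtain ⟨L₀, hL₀⟩ := exists_isLeast_Vs_mem R M hwf f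
  obtain ⟨S, hSK, hSL₀⟩ := f.nonempty_of_mem (Filter.inter_mem (Filter.le_principal_iff.mp hfK) hL₀.1)
  exact ⟨S, hSK, f.le_nhds_of_isLeast_Vs_mem R M hL₀ hSL₀⟩

/-- Thm 3.10: if `M` has dcc on socle submodules, then every finite intersection
`W^s(N₁) ∩ ... ∩ W^s(Nₙ)` (in particular `Spec^s(M)` itself, the case `n = 0`) is a
quasi-compact subset of `Spec^s(M)` with the second classical Zariski topology. -/
theorem stmt17
    (hdcc : ∀ f : ℕ → Submodule R M, (∀ n, secSocle R M (f n) = f n) →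
      (∀ n, f (n + 1) ≤ f n) → ∃ n, ∀ m, n ≤ m → f m = f n) :
    ∀ (n : ℕ) (N : Fin n → Submodule R M),
      IsCompact (⋂ i, Ws R M (N i)) :=
  fun _ _ => isCompact_of_wellFoundedOn_socle R M (wellFoundedOn_socle_of_dcc R M hdcc) _
end
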